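/- arXiv:2106.08289 — 2 statements merged into one kernel-verified Lean document; each statement's English description precedes it below -/
import Mathlib

section
/- Let n be an odd positive integer, let X = Z_n be the dihedral quandle (x▷y = 2y − x in Z_n), and let k be a field of characteristic zero. Then the only derivation of the quandle algebra k[X] is the zero map; i.e., the derivation algebra of k[X] is trivial. -/
/-- The quandle algebra multiplication on `X →₀ k`, as a bilinear map,
determined on basis vectors by `e_x · e_y = e_{op x y}`. -/
noncomputable def qmul {k X : Type*} [Field k] (op : X → X → X) :
    (X →₀ k) →ₗ[k] (X →₀ k) →ₗ[k] (X →₀ k) :=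
  Finsupp.lsum k fun x =>
    LinearMap.toSpanSingleton k ((X →₀ k) →ₗ[k] (X →₀ k))
      (Finsupp.lsum k fun y =>
        LinearMap.toSpanSingleton k (X →₀ k) (Finsupp.single (op x y) (1 : k)))

/-- A derivation of the quandle algebra: a linear map satisfying the Leibniz rule. -/
def IsDerivation {k X : Type*} [Field k] (op : X → X → X)
    (D : (X →₀ k) →ₗ[k] (X →₀ k)) : Prop :=
  ∀ a b : X →₀ k, D (qmul op a b) = qmul op (D a) b + qmul op a (D b)

/-!
Write `c(a, x)` for the coefficient of `e_{x+a}` in `D e_x`. Reading the Leibniz rule for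
`e_x · e_y` off at one basis vector (all translations of the quandle are bijective, since `2` is
invertible) gives `c(2b, 2y - x) = c(-2b, x) + c(b, y)`. Comparing two instances of this shows
that `s ↦ c(b, y + s) - c(b, y)` does not depend on `y`, hence is additive, hence vanishes on the
finite group `Z_n` in characteristic zero. So `c(b, ·)` is a constant `e(b)`, and the relation
becomes `e(2b) = e(-2b) + e(b)`, which forces `e` to be odd and `e(b) = 2 e(2b)`. Since doubling
is a permutation of finite order `r`, `e(b) = 2^r e(b)`, so `e = 0`.
-/

open Function Finsupp

section QuandleAlgebra

variable {k X : Type*} [Field k] (op : X → X → X)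

theorem qmul_single_single (x y : X) :
    qmul op (single x (1 : k)) (single y 1) = single (op x y) 1 := by
  simp only [qmul, lsum_single, LinearMap.toSpanSingleton_apply, one_smul]

theorem qmul_single_one_right (a : X →₀ k) (y : X) :
    qmul op a (single y 1) = a.mapDomain (op · y) := by
  induction a using Finsupp.induction_linear with
  | zero => simp
  | add f g hf hg => rw [map_add, LinearMap.add_apply, hf, hg, mapDomain_add]
  | single x c =>
    rw [← smul_single_one x c, map_smul, LinearMap.smul_apply, qmul_single_single,
      mapDomain_smul, mapDomain_single]

theorem qmul_single_one_left (x : X) (b : X →₀ k) :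
    qmul op (single x 1) b = b.mapDomain (op x ·) := by
  induction b using Finsupp.induction_linear with
  | zero => simp
  | add f g hf hg => rw [map_add, hf, hg, mapDomain_add]
  | single y c =>
    rw [← smul_single_one y c, map_smul, qmul_single_single, mapDomain_smul, mapDomain_single]

theorem IsDerivation.apply_single_op_apply {op : X → X → X} {D : (X →₀ k) →ₗ[k] (X →₀ k)}
    (hD : IsDerivation op D) (hr : ∀ y, Injective (op · y)) (hl : ∀ x, Injective (op x ·))
    {x y z₁ z₂ : X} (h : op x z₂ = op z₁ y) :
    D (single (op x y) 1) (op z₁ y) = D (single x 1) z₁ + D (single y 1) z₂ := by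
  have hxy := DFunLike.congr_fun (hD (single x 1) (single y 1)) (op z₁ y)
  have h_right : mapDomain (op x ·) (D (single y 1)) (op z₁ y) = D (single y 1) z₂ := by
    rw [← h]; exact mapDomain_apply (hl x) _ _
  rwa [qmul_single_single, qmul_single_one_right, qmul_single_one_left, Finsupp.add_apply,
    mapDomain_apply (hr y), h_right] at hxy

end QuandleAlgebra

theorem AddMonoidHom.eq_zero_of_finite {A R : Type*} [AddGroup A] [Finite A] [DivisionRing R]
    [CharZero R] (φ : A →+ R) : φ = 0 := by
  ext a
  have h := congrArg φ (addOrderOf_nsmul_eq_zero a)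
  rw [map_nsmul, map_zero, nsmul_eq_mul, mul_eq_zero] at h
  exact h.resolve_left (Nat.cast_ne_zero.mpr (addOrderOf_pos a).ne')

theorem eq_zero_of_forall_eq_two_mul_comp {A k : Type*} [Finite A] [Field k] [CharZero k]
    {f : A → A} (hf : Injective f) (e : A → k) (he : ∀ b, e b = 2 * e (f b)) : e = 0 := by
  let σ : Equiv.Perm A := Equiv.ofBijective f hf.bijective_of_finite
  have he_pow : ∀ m b, e b = 2 ^ m * e ((σ ^ m) b) := by
    intro m
    induction m with
    | zero => simp
    | succ m ih =>
      intro b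
      calc e b = 2 * e (σ b) := he b
        _ = 2 * (2 ^ m * e ((σ ^ m) (σ b))) := by rw [← ih]
        _ = 2 ^ (m + 1) * e ((σ ^ (m + 1)) b) := by
          rw [pow_succ σ, Equiv.Perm.mul_apply]; ring
  obtain ⟨r, hr, hσr⟩ := (isOfFinOrder_of_finite σ).exists_pow_eq_one
  have h2r : (2 : k) ^ r - 1 ≠ 0 :=
    sub_ne_zero.mpr (by exact_mod_cast (Nat.one_lt_two_pow hr.ne').ne')
  funext b
  have hb := he_pow r b
  rw [hσr, Equiv.Perm.one_apply] at hb
  have : ((2 : k) ^ r - 1) * e b = 0 := by linear_combination -hb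
  exact (mul_eq_zero.mp this).resolve_left h2r

section Takasaki

variable {A k : Type*} [AddCommGroup A] [Field k] {D : (A →₀ k) →ₗ[k] (A →₀ k)}

noncomputable def shiftCoeff (D : (A →₀ k) →ₗ[k] (A →₀ k)) (a x : A) : k :=
  D (single x 1) (x + a)

theorem shiftCoeff_relation (hD : IsDerivation (fun x y : A => 2 • y - x) D)
    (h2 : Injective (fun a : A => 2 • a)) (b x y : A) :
    shiftCoeff D (2 • b) (2 • y - x) = shiftCoeff D (-(2 • b)) x + shiftCoeff D b y := by
  have h := hD.apply_single_op_apply (fun y => sub_right_injective)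
    (fun x => sub_left_injective.comp h2) (x := x) (y := y) (z₁ := x - 2 • b) (z₂ := y + b)
    (by rw [smul_add]; abel)
  simp only [shiftCoeff, ← sub_eq_add_neg]
  convert h using 2
  abel

variable [Finite A] [CharZero k]

theorem shiftCoeff_eq_shiftCoeff_zero (hD : IsDerivation (fun x y : A => 2 • y - x) D)
    (h2 : Injective (fun a : A => 2 • a)) (b y : A) :
    shiftCoeff D b y = shiftCoeff D b 0 := by
  have increment : ∀ y s, shiftCoeff D b (y + s) - shiftCoeff D b y
      = shiftCoeff D (-(2 • b)) 0 - shiftCoeff D (-(2 • b)) (2 • s) := by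
    intro y s
    have h₁ := shiftCoeff_relation hD h2 b 0 y
    have h₂ := shiftCoeff_relation hD h2 b (2 • s) (y + s)
    rw [smul_add, add_sub_cancel_right] at h₂
    rw [sub_zero] at h₁
    linear_combination h₁ - h₂
  let φ : A →+ k := AddMonoidHom.mk' (fun s => shiftCoeff D b s - shiftCoeff D b 0) fun s t => by
    have := (increment s t).trans (increment 0 t).symm
    rw [zero_add] at this
    linear_combination this
  exact sub_eq_zero.mp (DFunLike.congr_fun φ.eq_zero_of_finite y)

theorem IsDerivation.eq_zero_of_two_nsmul_injective
    (hD : IsDerivation (fun x y : A => 2 • y - x) D) (h2 : Injective (fun a : A => 2 • a)) :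
    D = 0 := by
  set e : A → k := fun b => shiftCoeff D b 0
  have he : ∀ b, e (2 • b) = e (-(2 • b)) + e b := fun b => by
    simpa only [smul_zero, sub_zero, shiftCoeff_eq_shiftCoeff_zero hD h2 _ 0]
      using shiftCoeff_relation hD h2 b 0 0
  have e_neg : ∀ b, e (-b) = -e b := fun b => by
    have := he (-b)
    rw [smul_neg, neg_neg] at this
    linear_combination -this - he b
  have e_zero : e = 0 :=
    eq_zero_of_forall_eq_two_mul_comp h2 e fun b => by
      linear_combination -(he b) - e_neg (2 • b)
  refine Finsupp.basisSingleOne.ext fun x => ?_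
  rw [LinearMap.zero_apply, coe_basisSingleOne]
  ext w
  have : D (single x 1) w = e (w - x) := by
    show _ = shiftCoeff D (w - x) 0
    rw [← shiftCoeff_eq_shiftCoeff_zero hD h2 _ x, shiftCoeff, add_sub_cancel]
  rw [this, e_zero, Pi.zero_apply, Finsupp.coe_zero, Pi.zero_apply]

end Takasaki

/-- For an odd positive integer `n` and a field `k` of characteristic zero, the only derivation
of the quandle algebra of the dihedral quandle `Z_n` (with `x ▷ y = 2y - x`) is the zero map. -/
theorem dihedral_odd_derivation_trivial {k : Type*} [Field k] [CharZero k]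
    (n : ℕ) (hn : Odd n) (hpos : 0 < n)
    (D : (ZMod n →₀ k) →ₗ[k] (ZMod n →₀ k))
    (hD : IsDerivation (fun x y : ZMod n => 2 * y - x) D) :
    D = 0 := by
  have : NeZero n := ⟨hpos.ne'⟩
  have two_unit : IsUnit (2 : ZMod n) := by
    exact_mod_cast (ZMod.isUnit_iff_coprime 2 n).mpr (Nat.coprime_two_left.mpr hn)
  have h2 : Injective (fun a : ZMod n => 2 • a) := by
    simpa only [nsmul_eq_mul, Nat.cast_ofNat] using two_unit.mul_right_injective
  have hD' : IsDerivation (fun x y : ZMod n => 2 • y - x) D := by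
    simpa only [two_nsmul, two_mul] using hD
  exact hD'.eq_zero_of_two_nsmul_injective h2
end

section
/- Let R be a commutative ring, α ∈ R an invertible element, β = 1 − α, and M an R-module; equip M with the Alexander quandle operation x▷y = αx + βy. Let k be a field and A = k[M] the quandle algebra. Then for all x, y ∈ M the identity of linear endomorphisms of A holds: [L_{e_x}, L_{e_y}] = L_{e_{x+βy}} ∘ L_{e_0} − L_{e_{y+βx}} ∘ L_{e_0}, where [f,g] = f∘g − g∘f and 0 denotes the zero element of M. -/
/-!
Left multiplication by a basis vector `e_x` is the linear extension of the map `z ↦ x ▷ z`, so a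
composite `L_{e_x} ∘ L_{e_y}` only depends on the map `z ↦ x ▷ (y ▷ z)`. For the Alexander quandle
this map equals `z ↦ (x + βy) ▷ (0 ▷ z)`, both being `z ↦ αx + αβy + β²z`; the identity then
holds termwise, before taking commutators.
-/

theorem qmul_single_single_s17 {k X : Type*} [Field k] (op : X → X → X) (a b : X) (c d : k) :
    qmul op (Finsupp.single a c) (Finsupp.single b d) = Finsupp.single (op a b) (c * d) := by
  simp [qmul]

theorem qmul_single_one {k X : Type*} [Field k] (op : X → X → X) (a : X) :
    qmul op (Finsupp.single a (1 : k)) = Finsupp.lmapDomain k k (op a) := by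
  ext b
  simp [qmul_single_single_s17]

theorem qmul_single_one_comp {k X : Type*} [Field k] (op : X → X → X) (a b : X) :
    (qmul op (Finsupp.single a (1 : k))).comp (qmul op (Finsupp.single b (1 : k))) =
      Finsupp.lmapDomain k k (op a ∘ op b) := by
  rw [qmul_single_one, qmul_single_one, Finsupp.lmapDomain_comp]

theorem alexander_op_op_eq_op_zero {R M : Type*} [CommRing R] [AddCommGroup M] [Module R M]
    (α : R) (op : M → M → M) (hop : ∀ x y, op x y = α • x + (1 - α) • y) (x y : M) :
    op x ∘ op y = op (x + (1 - α) • y) ∘ op 0 := by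
  funext z
  simp only [Function.comp_apply, hop]
  module

theorem alexander_left_mul_bracket_general {k R M : Type*} [Field k]
    [CommRing R] [AddCommGroup M] [Module R M] (α : R)
    (op : M → M → M) (hop : ∀ x y, op x y = α • x + (1 - α) • y) (x y : M) :
    (qmul op (Finsupp.single x (1 : k))).comp (qmul op (Finsupp.single y (1 : k))) -
        (qmul op (Finsupp.single y (1 : k))).comp (qmul op (Finsupp.single x (1 : k))) =
      (qmul op (Finsupp.single (x + (1 - α) • y) (1 : k))).comp
          (qmul op (Finsupp.single (0 : M) (1 : k))) -
        (qmul op (Finsupp.single (y + (1 - α) • x) (1 : k))).comp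
          (qmul op (Finsupp.single (0 : M) (1 : k))) := by
  simp only [qmul_single_one_comp]
  rw [alexander_op_op_eq_op_zero α op hop x y, alexander_op_op_eq_op_zero α op hop y x]

/-- For the Alexander quandle `x ▷ y = α•x + (1-α)•y` on an `R`-module `M` (with `α` a unit),
the left multiplication operators on the quandle algebra satisfy
`[L_{e_x}, L_{e_y}] = L_{e_{x+βy}} ∘ L_{e_0} − L_{e_{y+βx}} ∘ L_{e_0}`, where `β = 1 - α`. -/
theorem alexander_left_mul_bracket {k R M : Type*} [Field k]
    [CommRing R] [AddCommGroup M] [Module R M] (α : R) (hα : IsUnit α)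
    (op : M → M → M) (hop : ∀ x y, op x y = α • x + (1 - α) • y) (x y : M) :
    (qmul op (Finsupp.single x (1 : k))).comp (qmul op (Finsupp.single y (1 : k))) -
        (qmul op (Finsupp.single y (1 : k))).comp (qmul op (Finsupp.single x (1 : k))) =
      (qmul op (Finsupp.single (x + (1 - α) • y) (1 : k))).comp
          (qmul op (Finsupp.single (0 : M) (1 : k))) -
        (qmul op (Finsupp.single (y + (1 - α) • x) (1 : k))).comp
          (qmul op (Finsupp.single (0 : M) (1 : k))) :=
  alexander_left_mul_bracket_general α op hop x y
end
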